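/- There exists a universal constant d₀ > 0 such that for all integers d ≥ d₀ and every nonnegative measurable function f : [−1,1] → ℝ: ∫_{−1}^{1} f(x) dμ_d(x) ≥ (1/(2 e π)) · ∫_{−1}^{1} f(t/√d) dt, where the right-hand integral is with respect to Lebesgue measure. -/

import Mathlib

/-!
Change variables `x = t / √d`: the right-hand side becomes `√d / (2eπ) ∫_{|x| ≤ 1/√d} f`, so it
suffices that the density of `μ_d` is at least `√d / (2eπ)` on `|x| ≤ 1/√d`. There the factor
`(1 - x²)^((d-3)/2)` is at least `(1 - 1/d)^((d-1)/2) ≥ e^{-1/2}`, and log-convexity of `Γ`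
gives `Γ(d/2) / Γ((d-1)/2) ≥ √((d-2)/2)`; the resulting bound `√((d-2)/(2πe))` beats
`√d / (2eπ)` as soon as `d ≥ 3`.
-/

open MeasureTheory Real

/-- The probability measure `μ_d` on `[-1,1]` with density
`Γ(d/2)/(√π Γ((d-1)/2)) (1-x²)^((d-3)/2)` w.r.t. Lebesgue measure. -/
noncomputable def muD (d : ℕ) : Measure ℝ :=
  ((volume : Measure ℝ).restrict (Set.Icc (-1 : ℝ) 1)).withDensity fun x =>
    ENNReal.ofReal (Real.Gamma ((d : ℝ) / 2) / (Real.sqrt π * Real.Gamma (((d : ℝ) - 1) / 2)) *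
      (1 - x ^ 2) ^ (((d : ℝ) - 3) / 2))

open Set ENNReal

theorem Real.sqrt_mul_Gamma_add_half_le {s : ℝ} (hs : 0 < s) :
    √s * Gamma (s + 1 / 2) ≤ Gamma (s + 1) := by
  have hΓ : 0 < Gamma (s + 1) := Gamma_pos_of_pos (by linarith)
  have hconv : Gamma (s + 1 / 2) ≤ √(Gamma s) * √(Gamma (s + 1)) := by
    have := Gamma_mul_add_mul_le_rpow_Gamma_mul_rpow_Gamma hs (by linarith : 0 < s + 1)
      (by norm_num : (0 : ℝ) < 1 / 2) (by norm_num : (0 : ℝ) < 1 / 2) (by norm_num)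
    rwa [show 1 / 2 * s + 1 / 2 * (s + 1) = s + 1 / 2 by ring, ← sqrt_eq_rpow,
      ← sqrt_eq_rpow] at this
  calc √s * Gamma (s + 1 / 2) ≤ √s * (√(Gamma s) * √(Gamma (s + 1))) := by gcongr
    _ = √(s * Gamma s) * √(Gamma (s + 1)) := by rw [sqrt_mul hs.le, mul_assoc]
    _ = Gamma (s + 1) := by rw [← Gamma_add_one hs.ne', mul_self_sqrt hΓ.le]

theorem Real.exp_neg_mul_le_one_sub_inv_rpow {a c : ℝ} (ha : 1 < a) (hc : 0 ≤ c) :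
    exp (-c) ≤ (1 - a⁻¹) ^ (c * (a - 1)) := by
  have ha1 : 0 < a - 1 := by linarith
  have hbase : 0 < 1 - a⁻¹ := sub_pos.2 (inv_lt_one_of_one_lt₀ ha)
  have hexp : exp (-(a - 1)⁻¹) ≤ 1 - a⁻¹ := by
    rw [exp_neg, inv_le_comm₀ (exp_pos _) hbase,
      show (1 - a⁻¹)⁻¹ = (a - 1)⁻¹ + 1 by field_simp; ring]
    exact add_one_le_exp _
  calc exp (-c) = exp (-(a - 1)⁻¹) ^ (c * (a - 1)) := by
        rw [← exp_mul]; congr 1; field_simp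
    _ ≤ (1 - a⁻¹) ^ (c * (a - 1)) := by gcongr

theorem setLIntegral_Icc_comp_div {c : ℝ} (hc : 0 < c) {g : ℝ → ℝ≥0∞} (hg : Measurable g)
    (a b : ℝ) :
    ∫⁻ t in Icc a b, g (t / c) = ENNReal.ofReal c * ∫⁻ x in Icc (a / c) (b / c), g x := by
  have hmap : Measure.map (· * c⁻¹) volume = ENNReal.ofReal c • (volume : Measure ℝ) := by
    rw [map_volume_mul_right (inv_ne_zero hc.ne'), inv_inv, abs_of_pos hc]
  have hpre : (· * c⁻¹) ⁻¹' Icc (a / c) (b / c) = Icc a b := by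
    rw [preimage_mul_const_Icc₀ _ _ (inv_pos.2 hc)]; field_simp
  rw [← smul_eq_mul, ← lintegral_smul_measure, ← Measure.restrict_smul, ← hmap,
    setLIntegral_map measurableSet_Icc hg (measurable_mul_const _), hpre]
  simp only [div_eq_mul_inv]

noncomputable def muDDensity (d x : ℝ) : ℝ :=
  Gamma (d / 2) / (√π * Gamma ((d - 1) / 2)) * (1 - x ^ 2) ^ ((d - 3) / 2)

theorem muD_eq_withDensity (d : ℕ) :
    muD d = (volume.restrict (Icc (-1) 1)).withDensity fun x => ENNReal.ofReal (muDDensity d x) :=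
  rfl

theorem measurable_muDDensity (d : ℝ) : Measurable (muDDensity d) := by
  unfold muDDensity; fun_prop

theorem sqrt_div_sqrt_pi_le_Gamma_div {d : ℝ} (hd : 2 < d) :
    √((d - 2) / 2) / √π ≤ Gamma (d / 2) / (√π * Gamma ((d - 1) / 2)) := by
  have h := sqrt_mul_Gamma_add_half_le (by linarith : 0 < (d - 2) / 2)
  rw [show (d - 2) / 2 + 1 / 2 = (d - 1) / 2 by ring, show (d - 2) / 2 + 1 = d / 2 by ring] at h
  rw [div_le_div_iff₀ (by positivity) (mul_pos (by positivity) (Gamma_pos_of_pos (by linarith)))]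
  nlinarith [sqrt_nonneg π]

theorem exp_neg_half_le_one_sub_sq_rpow {d x : ℝ} (hd : 3 ≤ d) (hx : x ^ 2 ≤ d⁻¹) :
    exp (-(1 / 2)) ≤ (1 - x ^ 2) ^ ((d - 3) / 2) := by
  have hbase : 0 < 1 - d⁻¹ := sub_pos.2 (inv_lt_one_of_one_lt₀ (by linarith))
  calc exp (-(1 / 2)) ≤ (1 - d⁻¹) ^ (1 / 2 * (d - 1)) :=
        exp_neg_mul_le_one_sub_inv_rpow (by linarith) (by norm_num)
    _ ≤ (1 - d⁻¹) ^ ((d - 3) / 2) :=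
        rpow_le_rpow_of_exponent_ge hbase (by simp; linarith) (by linarith)
    _ ≤ (1 - x ^ 2) ^ ((d - 3) / 2) := by gcongr

theorem sqrt_div_two_exp_pi_le {d : ℝ} (hd : 3 ≤ d) :
    √d / (2 * exp 1 * π) ≤ √((d - 2) / 2) / √π * exp (-(1 / 2)) := by
  have he : 2 ≤ exp 1 := by linarith [add_one_le_exp 1]
  have hπ : 3 ≤ π := pi_gt_three.le
  rw [← pow_le_pow_iff_left₀ (by positivity) (by positivity) two_ne_zero]
  simp only [div_pow, mul_pow]
  have hexp : exp (-(1 / 2)) ^ 2 = (exp 1)⁻¹ := by rw [← exp_nat_mul, ← exp_neg]; norm_num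
  rw [sq_sqrt (by linarith), sq_sqrt (by linarith), sq_sqrt pi_pos.le, hexp]
  have heπ : 6 ≤ exp 1 * π := by nlinarith
  field_simp
  nlinarith

theorem muDDensity_ge {d x : ℝ} (hd : 3 ≤ d) (hx : x ^ 2 ≤ d⁻¹) :
    √d / (2 * exp 1 * π) ≤ muDDensity d x := by
  have := Gamma_pos_of_pos (show 0 < d / 2 by linarith)
  have := Gamma_pos_of_pos (show 0 < (d - 1) / 2 by linarith)
  exact (sqrt_div_two_exp_pi_le hd).trans <|
    mul_le_mul (sqrt_div_sqrt_pi_le_Gamma_div (by linarith))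
      (exp_neg_half_le_one_sub_sq_rpow hd hx) (exp_pos _).le (by positivity)

/-- For large enough `d` and every nonnegative measurable `f`,
`∫ f dμ_d ≥ (1/(2eπ)) ∫_{-1}^{1} f(t/√d) dt`. -/
theorem muD_integral_lower_bound :
    ∃ d₀ : ℕ, 0 < d₀ ∧ ∀ d : ℕ, d₀ ≤ d → ∀ f : ℝ → ℝ, Measurable f → (∀ x, 0 ≤ f x) →
      (∫⁻ x, ENNReal.ofReal (f x) ∂ muD d) ≥
        ENNReal.ofReal (1 / (2 * Real.exp 1 * π)) *
          ∫⁻ t in Set.Icc (-1 : ℝ) 1, ENNReal.ofReal (f (t / Real.sqrt d)) := by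
  refine ⟨3, by norm_num, fun d hd f hf _ => ?_⟩
  have hd3 : (3 : ℝ) ≤ d := by exact_mod_cast hd
  have hs : 1 ≤ √(d : ℝ) := one_le_sqrt.2 (by linarith)
  have hsq : ∀ x ∈ Icc (-1 / √(d : ℝ)) (1 / √d), x ^ 2 ≤ (d : ℝ)⁻¹ := fun x hx => by
    simpa [div_pow, sq_sqrt (by linarith : (0 : ℝ) ≤ d)] using
      sq_le_sq' (by rw [← neg_div]; exact hx.1) hx.2
  have hsub : Icc (-1 / √(d : ℝ)) (1 / √d) ⊆ Icc (-1) 1 := Icc_subset_Icc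
    (by rw [le_div_iff₀ (by positivity)]; linarith) (div_le_one_of_le₀ hs (by positivity))
  rw [ge_iff_le, setLIntegral_Icc_comp_div (by positivity) hf.ennreal_ofReal, ← mul_assoc,
    ← ENNReal.ofReal_mul (by positivity), one_div_mul_eq_div,
    ← lintegral_const_mul' _ _ ofReal_ne_top, muD_eq_withDensity,
    lintegral_withDensity_eq_lintegral_mul _ (measurable_muDDensity d).ennreal_ofReal
      hf.ennreal_ofReal]
  calc ∫⁻ x in Icc (-1 / √(d : ℝ)) (1 / √d), .ofReal (√d / (2 * exp 1 * π)) * .ofReal (f x)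
      ≤ ∫⁻ x in Icc (-1 / √(d : ℝ)) (1 / √d), .ofReal (muDDensity d x) * .ofReal (f x) :=
        setLIntegral_mono' measurableSet_Icc fun x hx =>
          mul_le_mul_left (ofReal_le_ofReal (muDDensity_ge hd3 (hsq x hx))) _
    _ ≤ ∫⁻ x in Icc (-1) 1, .ofReal (muDDensity d x) * .ofReal (f x) := lintegral_mono_set hsub
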